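/- arXiv:1702.03608 — 2 statements merged into one kernel-verified Lean document; each statement's English description precedes it below -/
import Mathlib

section
/- (Differential Hensel's Lemma, m = 1 case) Let f ∈ O{x, δ₁} where O = ℂ[[t]] and δ₁ = t d/dt, with f̄ ≠ 0 mod t. Suppose f̄ = g₀ h₀ with g₀, h₀ ∈ ℂ[x] such that gcd(g₀(x + n), h₀(x)) = 1 for every positive integer n. Then there exist g, h ∈ O{x, δ₁} with f = g h, deg g = deg g₀, ḡ = g₀, and h̄ = h₀. -/
set_option maxHeartbeats 1000000
set_option synthInstance.maxHeartbeats 1000000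

noncomputable section

/-- `K = ℂ((t))`, the field of formal Laurent series. -/
abbrev K : Type := LaurentSeries ℂ

/-- The derivation `d = t * d/dt` on `K`, acting on coefficients by `cₙ ↦ n * cₙ`. -/
def dd : K →ₗ[ℂ] K where
  toFun f :=
    { coeff := fun n => (n : ℂ) * f.coeff n
      isPWO_support' := f.isPWO_support'.mono (fun n hn => by
        simp only [Function.mem_support, ne_eq] at hn ⊢
        exact fun h => hn (by rw [h, mul_zero])) }
  map_add' f g := by
    ext n
    simp [mul_add]
  map_smul' c f := by
    ext n
    simp [HahnSeries.coeff_smul]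
    ring

/-- Multiplication by `a ∈ K` as a `ℂ`-linear endomorphism of `K`. -/
def mulOp (a : K) : Module.End ℂ K where
  toFun f := a * f
  map_add' := mul_add a
  map_smul' c f := by
    simp only [RingHom.id_apply]
    rw [← HahnSeries.single_zero_mul_eq_smul, ← HahnSeries.single_zero_mul_eq_smul]
    ring

/-- `d = t d/dt` as an endomorphism. -/
def ddE : Module.End ℂ K := dd

/-- The element `t ∈ K`. -/
def tK : K := HahnSeries.single (1 : ℤ) (1 : ℂ)

/-- The element `t^i ∈ K` for `i : ℤ`. -/
def tpow (i : ℤ) : K := HahnSeries.single i (1 : ℂ)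

/-- The operator corresponding to the variable `x` of the twisted polynomial ring
`K{x, δ_m}`, i.e. the derivation `δ_m = t^m d/dt = t^(m-1) ⬝ (t d/dt)`. -/
def Xop (m : ℕ) : Module.End ℂ K := mulOp (tK ^ (m - 1)) * ddE

/-- The inclusion `O = ℂ[[t]] → K`. -/
def ofPS : PowerSeries ℂ →+* K := HahnSeries.ofPowerSeries ℤ ℂ

/-- The operator attached to a twisted polynomial `Σ_{i ≤ n} a_i x^i` with
coefficients `a_i ∈ O = ℂ[[t]]`, in `K{x, δ_m}`. -/
def opO (m n : ℕ) (a : ℕ → PowerSeries ℂ) : Module.End ℂ K :=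
  ∑ i ∈ Finset.range (n + 1), mulOp (ofPS (a i)) * (Xop m) ^ i

/-- Reduction mod `t` of a twisted polynomial with coefficients in `O`. -/
def red (n : ℕ) (a : ℕ → PowerSeries ℂ) : Polynomial ℂ :=
  ∑ i ∈ Finset.range (n + 1), Polynomial.C (PowerSeries.constantCoeff (R := ℂ) (a i)) * Polynomial.X ^ i

/-- The embedding `K → K`, `t ↦ t^q`, realising `K` as the subfield `ℂ((s^q)) ⊆ ℂ((s))`. -/
def embHom (q : ℕ) (hq : 0 < q) : K →+* K :=
  HahnSeries.embDomainRingHom (AddMonoidHom.mk' (fun n => (q : ℤ) * n) (by intro a b; ring))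
    (fun a b h => by
      simpa using mul_left_cancel₀ (by exact_mod_cast hq.ne' : (q : ℤ) ≠ 0) h)
    (fun a b => by
      constructor
      · intro h; exact le_of_mul_le_mul_left h (by exact_mod_cast hq)
      · intro h; exact mul_le_mul_of_nonneg_left h (by positivity))

/-!
Write `f = ∑ₗ tˡ Fₗ(x)`, `g = ∑ₚ tᵖ Gₚ(x)`, `h = ∑_q t^q H_q(x)` with `Fₗ, Gₚ, H_q ∈ ℂ[x]`.
Since `x t^q = t^q (x + q)` in `O{x, δ₁}`, the equation `f = g h` says
`∑_{p+q=l} Gₚ(x + q) H_q(x) = Fₗ` for every `l`. For `l = 0` this is `f̄ = g₀ h₀`; for `l > 0` the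
new unknowns enter only through `g₀(x + l) Hₗ + Gₗ h₀`, so coprimality of `g₀(x + l)` and `h₀`
solves for `Gₗ, Hₗ` with `deg Gₗ ≤ deg g₀` and `deg Hₗ ≤ n - deg g₀`, recursively in `l`.
The resulting identity of operators on `ℂ((t))` is checked on the monomials `tʷ`, `w ∈ ℕ`: a
differential operator `∑ cᵢ δ₁ⁱ` with Laurent series coefficients sends `tʷ` to `(∑ cᵢ wⁱ) tʷ`,
so it is determined by these values.
-/

open Polynomial Finset

theorem Nat.exists_seq_forall_of_exists_update {α : Type*} [Inhabited α] (P : ℕ → (ℕ → α) → Prop)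
    (hP : ∀ l s s', (∀ m ≤ l, s m = s' m) → P l s → P l s')
    (h : ∀ l s, (∀ m < l, P m s) → ∃ x, P l (Function.update s l x)) :
    ∃ s : ℕ → α, ∀ l, P l s := by
  let trunc (l : ℕ) (prev : (m : ℕ) → m < l → α) : ℕ → α := fun m =>
    if hm : m < l then prev m hm else default
  let s : ℕ → α := Nat.strongRec fun l prev =>
    Classical.epsilon fun x => P l (Function.update (trunc l prev) l x)
  have hs (l : ℕ) : s l = Classical.epsilon fun x =>
      P l (Function.update (trunc l fun m _ => s m) l x) :=
    Nat.strongRec_eq _ l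
  refine ⟨s, fun l => ?_⟩
  induction l using Nat.strong_induction_on with
  | _ l ih =>
    have htrunc : ∀ m < l, trunc l (fun m _ => s m) m = s m := fun m hm => dif_pos hm
    obtain ⟨x, hx⟩ := h l _ fun m hm =>
      hP m s _ (fun m' hm' => (htrunc m' (by omega)).symm) (ih m hm)
    refine hP l _ s (fun m hm => ?_) (hs l ▸ Classical.epsilon_spec ⟨x, hx⟩)
    rcases hm.lt_or_eq with hm | rfl
    · rw [Function.update_of_ne hm.ne, htrunc m hm]
    · rw [Function.update_self]

section TwistedPolynomial

variable {k : Type*}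

section CommSemiring

variable [CommSemiring k]

/-- `∑ₚ tᵖ Gₚ(δ₁)` acting on `k⟦t⟧`, where `δ₁ t^q = q t^q`. -/
def twistedAct (G : ℕ → k[X]) (u : PowerSeries k) : PowerSeries k :=
  PowerSeries.mk fun l => ∑ x ∈ antidiagonal l, (G x.1).eval (x.2 : k) * PowerSeries.coeff x.2 u

/-- The `tˡ`-coefficient of `(∑ₚ tᵖ Gₚ(x)) (∑_q t^q H_q(x))` in `k⟦t⟧{x, δ₁}`;
`taylor q` is the substitution `x ↦ x + q`. -/
def twistedMul (G H : ℕ → k[X]) (l : ℕ) : k[X] :=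
  ∑ x ∈ antidiagonal l, taylor (x.2 : k) (G x.1) * H x.2

theorem twistedAct_twistedAct (G H : ℕ → k[X]) (u : PowerSeries k) :
    twistedAct G (twistedAct H u) = twistedAct (twistedMul G H) u := by
  ext l
  simp only [twistedAct, twistedMul, PowerSeries.coeff_mk, eval_finsetSum, mul_sum, sum_mul,
    sum_sigma']
  apply sum_nbij' (fun ⟨⟨p, _⟩, ⟨r, s⟩⟩ ↦ ⟨(p + r, s), (p, r)⟩)
    (fun ⟨⟨_, s⟩, ⟨p, r⟩⟩ ↦ ⟨(p, r + s), (r, s)⟩) <;>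
  rintro ⟨⟨p, q⟩, ⟨r, s⟩⟩ h <;>
  simp only [mem_sigma, HasAntidiagonal.mem_antidiagonal, Sigma.mk.injEq, Prod.mk.injEq,
    heq_eq_eq, and_true, true_and] at h ⊢ <;>
  try omega
  obtain ⟨-, rfl⟩ := h
  rw [eval_mul, taylor_eval, Nat.cast_add, add_comm (r : k), mul_assoc]

lemma twistedMul_congr {G G' H H' : ℕ → k[X]} {l : ℕ}
    (hG : ∀ m ≤ l, G m = G' m) (hH : ∀ m ≤ l, H m = H' m) :
    twistedMul G H l = twistedMul G' H' l :=
  sum_congr rfl fun x hx => by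
    have := HasAntidiagonal.mem_antidiagonal.1 hx
    rw [hG x.1 (by omega), hH x.2 (by omega)]

lemma natDegree_twistedMul_le {G H : ℕ → k[X]} {l d e : ℕ}
    (hG : ∀ m ≤ l, (G m).natDegree ≤ d) (hH : ∀ m ≤ l, (H m).natDegree ≤ e) :
    (twistedMul G H l).natDegree ≤ d + e :=
  natDegree_sum_le_of_forall_le _ _ fun x hx => by
    have := HasAntidiagonal.mem_antidiagonal.1 hx
    exact natDegree_mul_le.trans
      (add_le_add ((natDegree_taylor _ _).trans_le (hG _ (by omega))) (hH _ (by omega)))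

/-- The `tˡ`-coefficient of `∑_{i ≤ n} aᵢ xⁱ`, as a polynomial in `x`. -/
def tCoeff (n : ℕ) (a : ℕ → PowerSeries k) (l : ℕ) : k[X] :=
  ∑ i ∈ range (n + 1), C (PowerSeries.coeff l (a i)) * X ^ i

lemma natDegree_tCoeff_le (n : ℕ) (a : ℕ → PowerSeries k) (l : ℕ) : (tCoeff n a l).natDegree ≤ n :=
  natDegree_sum_le_of_forall_le _ _ fun _ hi =>
    (natDegree_C_mul_X_pow_le _ _).trans (Nat.lt_succ_iff.1 (mem_range.1 hi))

def ofTCoeff (G : ℕ → k[X]) (j : ℕ) : PowerSeries k :=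
  PowerSeries.mk fun l => (G l).coeff j

lemma tCoeff_ofTCoeff {G : ℕ → k[X]} {n : ℕ} (hG : ∀ l, (G l).natDegree ≤ n) :
    tCoeff n (ofTCoeff G) = G := by
  funext l
  simp only [tCoeff, ofTCoeff, PowerSeries.coeff_mk, C_mul_X_pow_eq_monomial]
  exact (as_sum_range' _ _ (Nat.lt_succ_of_le (hG l))).symm

end CommSemiring

lemma twistedMul_update [CommRing k] (G H : ℕ → k[X]) {l : ℕ} (hl : l ≠ 0) (g h : k[X]) :
    twistedMul (Function.update G l g) (Function.update H l h) l =
      twistedMul (Function.update G l 0) (Function.update H l 0) l + taylor (l : k) (G 0) * h +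
        g * H 0 := by
  rw [add_assoc, ← sub_eq_iff_eq_add', twistedMul, twistedMul, ← sum_sub_distrib,
    sum_eq_add_of_mem (0, l) (l, 0) (by simp) (by simp) (by simp [hl])]
  · simp [Function.update_of_ne hl.symm]
  · rintro ⟨p, q⟩ hx ⟨h1, h2⟩
    have hpq : p + q = l := HasAntidiagonal.mem_antidiagonal.1 hx
    have hp : p ≠ l := by rintro rfl; exact h2 (by rw [show q = 0 by omega])
    have hq : q ≠ l := by rintro rfl; exact h1 (by rw [show p = 0 by omega])
    simp [Function.update_of_ne hp, Function.update_of_ne hq]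

section Field

variable [Field k]

theorem IsCoprime.exists_mul_add_mul_eq_of_natDegree_le {A B R : k[X]} {n : ℕ}
    (hAB : IsCoprime A B) (hA : A ≠ 0) (hdeg : A.natDegree + B.natDegree ≤ n)
    (hR : R.natDegree ≤ n) :
    ∃ G H : k[X], G.natDegree ≤ A.natDegree ∧ H.natDegree ≤ n - A.natDegree ∧
      A * H + G * B = R := by
  obtain ⟨u, v, huv⟩ := hAB
  set G := v * R % A
  set H := u * R + v * R / A * B
  have hGH : A * H + G * B = R := by
    linear_combination R * huv + B * EuclideanDomain.div_add_mod (v * R) A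
  have hG : G.natDegree ≤ A.natDegree := natDegree_le_natDegree (degree_mod_lt _ hA).le
  refine ⟨G, H, hG, ?_, hGH⟩
  rcases eq_or_ne H 0 with hH | hH
  · simp [hH]
  have : A.natDegree + H.natDegree ≤ n := by
    rw [← natDegree_mul hA hH, eq_sub_of_add_eq hGH]
    exact (natDegree_sub_le _ _).trans (max_le hR (natDegree_mul_le.trans (by omega)))
  omega

theorem exists_twistedMul_update_eq {G H : ℕ → k[X]} {F : k[X]} {n l : ℕ} (hl : l ≠ 0)
    (hcop : IsCoprime (taylor (l : k) (G 0)) (H 0)) (hG₀ : G 0 ≠ 0)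
    (hdeg : (G 0).natDegree + (H 0).natDegree ≤ n) (hF : F.natDegree ≤ n)
    (hG : ∀ m < l, (G m).natDegree ≤ (G 0).natDegree)
    (hH : ∀ m < l, (H m).natDegree ≤ n - (G 0).natDegree) :
    ∃ g h : k[X], g.natDegree ≤ (G 0).natDegree ∧ h.natDegree ≤ n - (G 0).natDegree ∧
      twistedMul (Function.update G l g) (Function.update H l h) l = F := by
  set R := F - twistedMul (Function.update G l 0) (Function.update H l 0) l
  have hR : R.natDegree ≤ n := by
    refine (natDegree_sub_le _ _).trans (max_le hF ?_)
    refine (natDegree_twistedMul_le (d := (G 0).natDegree) (e := n - (G 0).natDegree) ?_ ?_).trans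
      (by omega)
    all_goals
      intro m hm
      rcases hm.lt_or_eq with hm | rfl
      · simp [Function.update_of_ne hm.ne, hG m hm, hH m hm]
      · simp
  obtain ⟨g, h, hg, hh, hgh⟩ := hcop.exists_mul_add_mul_eq_of_natDegree_le
    (mt (taylor_eq_zero _ _).1 hG₀) (by rwa [natDegree_taylor]) hR
  rw [natDegree_taylor] at hg hh
  refine ⟨g, h, hg, hh, ?_⟩
  rw [twistedMul_update _ _ hl]
  linear_combination hgh

theorem exists_twistedMul_eq {F : ℕ → k[X]} {g₀ h₀ : k[X]} {n : ℕ}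
    (hF : ∀ l, (F l).natDegree ≤ n) (hF₀ : F 0 = g₀ * h₀) (hg₀ : g₀ ≠ 0)
    (hdeg : g₀.natDegree + h₀.natDegree ≤ n)
    (hcop : ∀ l : ℕ, 0 < l → IsCoprime (taylor (l : k) g₀) h₀) :
    ∃ G H : ℕ → k[X], G 0 = g₀ ∧ H 0 = h₀ ∧ (∀ l, (G l).natDegree ≤ g₀.natDegree) ∧
      (∀ l, (H l).natDegree ≤ n - g₀.natDegree) ∧ twistedMul G H = F := by
  let P (l : ℕ) (s : ℕ → k[X] × k[X]) : Prop :=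
    s 0 = (g₀, h₀) ∧ (s l).1.natDegree ≤ g₀.natDegree ∧ (s l).2.natDegree ≤ n - g₀.natDegree ∧
      twistedMul (Prod.fst ∘ s) (Prod.snd ∘ s) l = F l
  obtain ⟨s, hs⟩ : ∃ s, ∀ l, P l s := by
    refine Nat.exists_seq_forall_of_exists_update P ?_ ?_
    · rintro l s s' hs ⟨h0, hG, hH, hF⟩
      refine ⟨hs 0 (Nat.zero_le _) ▸ h0, hs l le_rfl ▸ hG, hs l le_rfl ▸ hH, hF ▸ ?_⟩
      exact twistedMul_congr (fun m hm => by simp [hs m hm]) (fun m hm => by simp [hs m hm])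
    · intro l s hprev
      rcases Nat.eq_zero_or_pos l with rfl | hl
      · exact ⟨(g₀, h₀), by simp, le_rfl, by simp; omega, by simp [twistedMul, hF₀]⟩
      obtain ⟨hs0, -⟩ := hprev 0 hl
      obtain ⟨g, h, hg, hh, hgh⟩ := exists_twistedMul_update_eq (G := Prod.fst ∘ s)
        (H := Prod.snd ∘ s) hl.ne' (by simpa [hs0] using hcop l hl) (by simpa [hs0])
        (by simpa [hs0]) (hF l) (fun m hm => by simpa [hs0] using (hprev m hm).2.1)
        (fun m hm => by simpa [hs0] using (hprev m hm).2.2.1)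
      refine ⟨(g, h), by rwa [Function.update_of_ne hl.ne], by simpa [hs0] using hg,
        by simpa [hs0] using hh, ?_⟩
      rwa [Function.comp_update, Function.comp_update]
  exact ⟨Prod.fst ∘ s, Prod.snd ∘ s, by simp [(hs 0).1], by simp [(hs 0).1], fun l => (hs l).2.1,
    fun l => (hs l).2.2.1, funext fun l => (hs l).2.2.2⟩

end Field

end TwistedPolynomial

lemma mulOp_apply (c f : K) : mulOp c f = c * f := rfl

lemma mulOp_zero : mulOp 0 = 0 := by
  ext f; simp [mulOp_apply]

lemma mulOp_add (c d : K) : mulOp (c + d) = mulOp c + mulOp d := by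
  ext f; simp [mulOp_apply, add_mul]

lemma mulOp_mul (c d : K) : mulOp (c * d) = mulOp c * mulOp d := by
  ext f; simp [mulOp_apply, mul_assoc]

lemma Xop_one : Xop 1 = ddE := by
  ext f; simp [Xop, mulOp_apply]

lemma coeff_dd (f : K) (m : ℤ) : (dd f).coeff m = m * f.coeff m := rfl

lemma support_dd_subset (f : K) : (dd f).support ⊆ f.support :=
  fun m hm h => hm (by simp [coeff_dd, h])

lemma dd_mul (f g : K) : dd (f * g) = dd f * g + f * dd g := by
  ext m
  rw [HahnSeries.coeff_add, coeff_dd, HahnSeries.coeff_mul,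
    HahnSeries.coeff_mul_left' f.isPWO_support (support_dd_subset f),
    HahnSeries.coeff_mul_right' g.isPWO_support (support_dd_subset g), mul_sum,
    ← sum_add_distrib]
  refine sum_congr rfl fun x hx => ?_
  rw [← (mem_antidiagonal.1 hx).2.2, coeff_dd, coeff_dd]
  push_cast
  ring

lemma ddE_mul_mulOp (c : K) : ddE * mulOp c = mulOp (dd c) + mulOp c * ddE := by
  ext f
  simp [Module.End.mul_apply, mulOp_apply, ddE, dd_mul]

def diffOp : K[X] →+ Module.End ℂ K where
  toFun p := p.sum fun i c => mulOp c * ddE ^ i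
  map_zero' := sum_zero_index _
  map_add' p q := sum_add_index _ _ _ (fun i => by rw [mulOp_zero, zero_mul])
    (fun i c d => by rw [mulOp_add, add_mul])

lemma diffOp_monomial (i : ℕ) (c : K) : diffOp (monomial i c) = mulOp c * ddE ^ i :=
  sum_monomial_index c (fun i c => mulOp c * ddE ^ i) (by rw [mulOp_zero, zero_mul])

lemma opO_one_eq_diffOp (n : ℕ) (a : ℕ → PowerSeries ℂ) :
    opO 1 n a = diffOp (∑ i ∈ range (n + 1), monomial i (ofPS (a i))) := by
  simp only [opO, Xop_one, map_sum, diffOp_monomial]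

lemma mulOp_mul_diffOp (c : K) (p : K[X]) : mulOp c * diffOp p = diffOp (C c * p) := by
  induction p using Polynomial.induction_on' with
  | add p q hp hq => rw [map_add, mul_add, hp, hq, mul_add, map_add]
  | monomial i d => rw [C_mul_monomial, diffOp_monomial, diffOp_monomial, mulOp_mul, mul_assoc]

lemma exists_ddE_mul_diffOp (p : K[X]) : ∃ q, ddE * diffOp p = diffOp q := by
  induction p using Polynomial.induction_on' with
  | add p q hp hq =>
    obtain ⟨p', hp'⟩ := hp
    obtain ⟨q', hq'⟩ := hq
    exact ⟨p' + q', by rw [map_add, mul_add, hp', hq', map_add]⟩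
  | monomial i c =>
    refine ⟨monomial i (dd c) + monomial (i + 1) c, ?_⟩
    rw [map_add, diffOp_monomial, diffOp_monomial, diffOp_monomial, ← mul_assoc, ddE_mul_mulOp,
      add_mul, pow_succ', mul_assoc]

lemma exists_ddE_pow_mul_diffOp (i : ℕ) (p : K[X]) : ∃ q, ddE ^ i * diffOp p = diffOp q := by
  induction i with
  | zero => exact ⟨p, one_mul _⟩
  | succ i ih =>
    obtain ⟨q, hq⟩ := ih
    obtain ⟨r, hr⟩ := exists_ddE_mul_diffOp q
    exact ⟨r, by rw [pow_succ', mul_assoc, hq, hr]⟩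

lemma exists_diffOp_mul_diffOp (p q : K[X]) : ∃ r, diffOp p * diffOp q = diffOp r := by
  induction p using Polynomial.induction_on' with
  | add p p' hp hp' =>
    obtain ⟨r, hr⟩ := hp
    obtain ⟨r', hr'⟩ := hp'
    exact ⟨r + r', by rw [map_add, add_mul, hr, hr', map_add]⟩
  | monomial i c =>
    obtain ⟨r, hr⟩ := exists_ddE_pow_mul_diffOp i q
    exact ⟨C c * r, by rw [diffOp_monomial, mul_assoc, hr, mulOp_mul_diffOp]⟩

lemma tpow_ne_zero (w : ℤ) : tpow w ≠ 0 :=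
  HahnSeries.single_ne_zero one_ne_zero

lemma dd_tpow (w : ℤ) : dd (tpow w) = (w : ℂ) • tpow w := by
  ext m
  by_cases h : m = w
  · subst h; simp [coeff_dd, tpow]
  · simp [coeff_dd, tpow, h]

lemma ddE_pow_tpow (i : ℕ) (w : ℤ) : (ddE ^ i) (tpow w) = (w : ℂ) ^ i • tpow w := by
  induction i with
  | zero => simp
  | succ i ih =>
    rw [pow_succ', Module.End.mul_apply, ih, map_smul, ddE, dd_tpow, smul_smul, pow_succ]

lemma diffOp_apply_tpow (p : K[X]) (w : ℤ) : diffOp p (tpow w) = p.eval (w : K) * tpow w := by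
  induction p using Polynomial.induction_on' with
  | add p q hp hq => rw [map_add, LinearMap.add_apply, hp, hq, eval_add, add_mul]
  | monomial i c =>
    rw [diffOp_monomial, Module.End.mul_apply, ddE_pow_tpow, eval_monomial, mulOp_apply,
      ← HahnSeries.C_mul_eq_smul, map_pow, map_intCast, mul_assoc]

lemma eq_of_diffOp_apply_tpow {p q : K[X]} (h : ∀ w : ℕ, diffOp p (tpow w) = diffOp q (tpow w)) :
    p = q := by
  refine sub_eq_zero.1 (eq_zero_of_infinite_isRoot _ ?_)
  have := charZero_of_injective_algebraMap (algebraMap ℂ K).injective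
  refine Set.infinite_of_injective_forall_mem Nat.cast_injective fun w => ?_
  have hw := h w
  rw [diffOp_apply_tpow, diffOp_apply_tpow] at hw
  simpa [sub_eq_zero] using mul_right_cancel₀ (tpow_ne_zero w) hw

lemma ofPS_X_pow (w : ℕ) : ofPS (PowerSeries.X ^ w) = tpow w :=
  HahnSeries.ofPowerSeries_X_pow w

lemma dd_ofPS (u : PowerSeries ℂ) :
    dd (ofPS u) = ofPS (PowerSeries.mk fun q => q * PowerSeries.coeff q u) := by
  ext m
  simp only [coeff_dd, ofPS, PowerSeries.coeff_coe, PowerSeries.coeff_mk]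
  split_ifs with hm
  · rw [mul_zero]
  · rw [← Int.cast_natCast, Int.natAbs_of_nonneg (not_lt.1 hm)]

lemma ddE_pow_ofPS (i : ℕ) (u : PowerSeries ℂ) :
    (ddE ^ i) (ofPS u) = ofPS (PowerSeries.mk fun q => (q : ℂ) ^ i * PowerSeries.coeff q u) := by
  induction i with
  | zero =>
    rw [pow_zero, Module.End.one_apply]
    congr 1
    ext q
    simp
  | succ i ih =>
    rw [pow_succ', Module.End.mul_apply, ih, ddE, dd_ofPS]
    congr 1
    ext q
    simp only [PowerSeries.coeff_mk]
    ring

lemma red_eq_tCoeff_zero (n : ℕ) (a : ℕ → PowerSeries ℂ) : red n a = tCoeff n a 0 := by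
  simp only [red, tCoeff, PowerSeries.coeff_zero_eq_constantCoeff]

lemma opO_one_apply_ofPS (n : ℕ) (a : ℕ → PowerSeries ℂ) (u : PowerSeries ℂ) :
    opO 1 n a (ofPS u) = ofPS (twistedAct (tCoeff n a) u) := by
  rw [opO, Xop_one, LinearMap.sum_apply]
  simp only [Module.End.mul_apply, ddE_pow_ofPS, mulOp_apply, ← map_mul, ← map_sum]
  congr 1
  ext l
  simp only [twistedAct, tCoeff, map_sum, PowerSeries.coeff_mul, PowerSeries.coeff_mk,
    eval_finsetSum, sum_mul]
  rw [sum_comm]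
  refine sum_congr rfl fun x _ => sum_congr rfl fun i _ => ?_
  simp only [eval_mul, eval_C, eval_pow, eval_X]
  ring

theorem opO_one_eq_mul_of_twistedMul_eq {n N₁ N₂ : ℕ} {a b c : ℕ → PowerSeries ℂ}
    (h : twistedMul (tCoeff N₁ b) (tCoeff N₂ c) = tCoeff n a) :
    opO 1 n a = opO 1 N₁ b * opO 1 N₂ c := by
  have happly : ∀ w : ℕ, opO 1 n a (tpow w) = (opO 1 N₁ b * opO 1 N₂ c) (tpow w) := fun w => by
    rw [← ofPS_X_pow, Module.End.mul_apply, opO_one_apply_ofPS, opO_one_apply_ofPS,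
      opO_one_apply_ofPS, twistedAct_twistedAct, h]
  obtain ⟨r, hr⟩ := exists_diffOp_mul_diffOp (∑ i ∈ range (N₁ + 1), monomial i (ofPS (b i)))
    (∑ i ∈ range (N₂ + 1), monomial i (ofPS (c i)))
  simp only [opO_one_eq_diffOp, hr] at happly ⊢
  rw [eq_of_diffOp_apply_tpow happly]

/-- Differential Hensel's Lemma for `m = 1`: if `f̄ = g₀ h₀` with `gcd(g₀(x+k), h₀(x)) = 1`
for all positive integers `k`, then the factorisation lifts to `O{x, δ₁}`. -/
theorem stmt_5 (n : ℕ) (a : ℕ → PowerSeries ℂ) (g₀ h₀ : Polynomial ℂ)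
    (hf0 : red n a ≠ 0) (hfact : red n a = g₀ * h₀)
    (hcop : ∀ k : ℕ, 0 < k → IsCoprime (g₀.comp (Polynomial.X + Polynomial.C (k : ℂ))) h₀) :
    ∃ b c : ℕ → PowerSeries ℂ,
      opO 1 n a = opO 1 g₀.natDegree b * opO 1 (n - g₀.natDegree) c ∧
      red g₀.natDegree b = g₀ ∧ red (n - g₀.natDegree) c = h₀ := by
  rw [red_eq_tCoeff_zero] at hf0 hfact
  have hg₀ : g₀ ≠ 0 := by rintro rfl; exact hf0 (by rw [hfact, zero_mul])
  have hh₀ : h₀ ≠ 0 := by rintro rfl; exact hf0 (by rw [hfact, mul_zero])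
  have hdeg : g₀.natDegree + h₀.natDegree ≤ n := by
    rw [← natDegree_mul hg₀ hh₀, ← hfact]
    exact natDegree_tCoeff_le n a 0
  obtain ⟨G, H, hG₀, hH₀, hG, hH, hGH⟩ := exists_twistedMul_eq (natDegree_tCoeff_le n a) hfact hg₀
    hdeg fun l hl => by simpa only [taylor_apply] using hcop l hl
  refine ⟨ofTCoeff G, ofTCoeff H, opO_one_eq_mul_of_twistedMul_eq ?_, ?_, ?_⟩
  · rw [tCoeff_ofTCoeff hG, tCoeff_ofTCoeff hH, hGH]
  · rw [red_eq_tCoeff_zero, tCoeff_ofTCoeff hG, hG₀]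
  · rw [red_eq_tCoeff_zero, tCoeff_ofTCoeff hH, hH₀]
end
end

section
/- (Unipotent classification, one direction) Let N be a nilpotent n×n complex matrix, and let D = d + N act on K^n where K = ℂ((t)) and d = t d/dt componentwise. Then ker(D^n) equals ℂ^n, the set of constant vectors, and D restricted to ker(D^n) equals N. -/
set_option maxHeartbeats 1000000
set_option synthInstance.maxHeartbeats 1000000

noncomputable section

/-! The `k`-th coefficients of the components of `v` form a vector `cₖ(v) ∈ ℂⁿ`, and since
`d (tᵏ) = k tᵏ` the operator `D = d + N` acts on it as the matrix `k • 1 + N`. For `k ≠ 0` this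
matrix is a unit (a nonzero scalar plus a commuting nilpotent), so `Dⁿ v = 0` forces `cₖ(v) = 0`;
for `k = 0` it is `N`, and `Nⁿ = 0`. -/

open Matrix

theorem Matrix.pow_card_eq_zero_of_isNilpotent {ι R : Type*} [Fintype ι] [DecidableEq ι]
    [CommRing R] [IsDomain R] {N : Matrix ι ι R} (hN : IsNilpotent N) :
    N ^ Fintype.card ι = 0 := by
  have hchar : N.charpoly = Polynomial.X ^ Fintype.card ι :=
    sub_eq_zero.mp (isNilpotent_charpoly_sub_pow_of_isNilpotent hN).eq_zero
  simpa [hchar] using N.aeval_self_charpoly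

theorem IsNilpotent.isUnit_smul_one_add {𝕜 A : Type*} [Field 𝕜] [Ring A] [Algebra 𝕜 A] {N : A}
    (hN : IsNilpotent N) {c : 𝕜} (hc : c ≠ 0) : IsUnit (c • (1 : A) + N) :=
  hN.isUnit_add_left_of_commute (Algebra.algebraMap_eq_smul_one (A := A) c ▸ hc.isUnit.map _)
    ((Commute.one_right N).smul_right c)

theorem IsUnit.mulVec_eq_zero_iff {ι 𝕜 : Type*} [Fintype ι] [DecidableEq ι] [Field 𝕜]
    {M : Matrix ι ι 𝕜} (hM : IsUnit M) {x : ι → 𝕜} : M *ᵥ x = 0 ↔ x = 0 :=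
  (mulVec_injective_iff_isUnit.mpr hM).eq_iff' (mulVec_zero M)

theorem LaurentSeries.coeff_algebraMap {R : Type*} [CommRing R] (c : R) (k : ℤ) :
    (algebraMap R (LaurentSeries R) c).coeff k = if k = 0 then c else 0 := by
  rw [HahnSeries.algebraMap_apply', PowerSeries.algebraMap_apply, HahnSeries.ofPowerSeries_C,
    HahnSeries.C_apply]
  simp [HahnSeries.coeff_single]

theorem LaurentSeries.exists_algebraMap_eq_iff {R : Type*} [CommRing R] (f : LaurentSeries R) :
    (∃ c, f = algebraMap R (LaurentSeries R) c) ↔ ∀ k ≠ 0, f.coeff k = 0 := by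
  constructor
  · rintro ⟨c, rfl⟩ k hk
    simp [LaurentSeries.coeff_algebraMap, hk]
  · refine fun h => ⟨f.coeff 0, ?_⟩
    ext k
    rw [LaurentSeries.coeff_algebraMap]
    split_ifs with hk
    · rw [hk]
    · exact h k hk

theorem dd_coeff (f : K) (k : ℤ) : (dd f).coeff k = k * f.coeff k := rfl

section CoeffVec

variable {ι : Type*}

def coeffVec (v : ι → K) (k : ℤ) : ι → ℂ := fun i => (v i).coeff k

theorem coeffVec_injective : Function.Injective (coeffVec (ι := ι)) := fun _ _ h =>
  funext fun i => HahnSeries.ext <| funext fun k => congrFun (congrFun h k) i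

theorem coeffVec_algebraMap (w : ι → ℂ) (k : ℤ) :
    coeffVec (fun i => algebraMap ℂ K (w i)) k = if k = 0 then w else 0 := by
  funext i
  split_ifs with hk <;> simp [coeffVec, LaurentSeries.coeff_algebraMap, hk]

theorem exists_algebraMap_eq_iff_coeffVec (v : ι → K) :
    (∃ w : ι → ℂ, v = fun i => algebraMap ℂ K (w i)) ↔ ∀ k ≠ 0, coeffVec v k = 0 := by
  simp only [funext_iff, ← Classical.skolem (p := fun i c => v i = algebraMap ℂ K c),
    LaurentSeries.exists_algebraMap_eq_iff, coeffVec, Pi.zero_apply]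
  exact ⟨fun h k hk i => h i k hk, fun h i k hk => h k hk i⟩

variable [Fintype ι] [DecidableEq ι] (N : Matrix ι ι ℂ) {D : (ι → K) → (ι → K)}

theorem coeffVec_apply_eq_mulVec (hD : ∀ v i, D v i = dd (v i) + ∑ j, N i j • v j)
    (v : ι → K) (k : ℤ) : coeffVec (D v) k = ((k : ℂ) • 1 + N) *ᵥ coeffVec v k := by
  funext i
  rw [add_mulVec, smul_mulVec, one_mulVec]
  simp [coeffVec, hD, HahnSeries.coeff_sum, dd_coeff, mulVec, dotProduct]

theorem coeffVec_iterate_eq_mulVec (hD : ∀ v i, D v i = dd (v i) + ∑ j, N i j • v j)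
    (m : ℕ) (v : ι → K) (k : ℤ) :
    coeffVec (D^[m] v) k = ((k : ℂ) • 1 + N) ^ m *ᵥ coeffVec v k := by
  induction m with
  | zero => simp
  | succ m ih =>
    rw [Function.iterate_succ_apply', coeffVec_apply_eq_mulVec N hD, ih, mulVec_mulVec, pow_succ']

theorem iterate_eq_zero_iff (hD : ∀ v i, D v i = dd (v i) + ∑ j, N i j • v j)
    (m : ℕ) (v : ι → K) :
    D^[m] v = 0 ↔ ∀ k : ℤ, ((k : ℂ) • 1 + N) ^ m *ᵥ coeffVec v k = 0 := by
  simp only [← coeffVec_iterate_eq_mulVec N hD, ← coeffVec_injective.eq_iff, funext_iff]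
  rfl

end CoeffVec

/-- For nilpotent `N ∈ Mₙ(ℂ)` and `D = d + N` on `K^n`: `ker(D^n)` is exactly the set of
constant vectors `ℂ^n`, and `D` restricted to it is `N`. -/
theorem stmt_17 (n : ℕ) (N : Matrix (Fin n) (Fin n) ℂ) (hN : IsNilpotent N)
    (D : (Fin n → K) → (Fin n → K))
    (hD : ∀ (v : Fin n → K) (i : Fin n), D v i = dd (v i) + ∑ j, N i j • v j) :
    (∀ v : Fin n → K, D^[n] v = 0 ↔ ∃ w : Fin n → ℂ, v = fun i => algebraMap ℂ K (w i)) ∧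
    (∀ w : Fin n → ℂ,
      D (fun i => algebraMap ℂ K (w i)) = fun i => algebraMap ℂ K (N.mulVec w i)) := by
  have hNn : N ^ n = 0 := by simpa using N.pow_card_eq_zero_of_isNilpotent hN
  refine ⟨fun v => ?_, fun w => coeffVec_injective <| funext fun k => ?_⟩
  · rw [iterate_eq_zero_iff N hD, exists_algebraMap_eq_iff_coeffVec]
    refine forall_congr' fun k => ?_
    rcases eq_or_ne k 0 with rfl | hk
    · simp [hNn]
    · have hunit := (hN.isUnit_smul_one_add (Int.cast_ne_zero (α := ℂ) |>.mpr hk)).pow n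
      simp only [hunit.mulVec_eq_zero_iff, hk, ne_eq, not_false_eq_true, forall_const]
  · rw [coeffVec_apply_eq_mulVec N hD, coeffVec_algebraMap, coeffVec_algebraMap]
    split_ifs with hk <;> simp [hk]
end
end
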